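/- Let X, Y be Hilbert spaces, A ∈ B(X,Y), and T ⊆ X, S ⊆ Y closed subspaces such that G = A_{T,S}^{(2)} exists. If T' is a closed subspace of X with δ̂(T,T') < 1/(1 + ‖A‖·‖G‖)², then the outer inverse A_{T',S}^{(2)} exists, it equals P_{T'}(I_X + G P_{S^⊥} A (P_{T'} − P_T))^{-1} G P_{S^⊥}, and ‖A_{T',S}^{(2)}‖ ≤ ‖G‖ / (1 − ‖G‖·‖A‖·δ̂(T,T')). -/

import Mathlib

/-!
Write `P`, `Q` for the orthogonal projections onto `T`, `T'`. Since `G` vanishes on `S`, the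
projection onto `Sᗮ` drops out and the perturbation is `t = G A (Q - P)`. Splitting a vector
along `T'` and `T'ᗮ` gives `‖P - Q‖ ≤ δ̂(T, T')`, so `‖t‖ ≤ ‖G‖ ‖A‖ δ̂ < 1` and `1 + t` is
invertible by a Neumann series with `‖(1 + t)⁻¹‖ ≤ (1 - ‖t‖)⁻¹`. The identity `P (1 + t) = G A Q`
gives `G A G' = G` for `G' = Q (1 + t)⁻¹ G`, whence `G' A G' = G'` and `N(G') = N(G) = S`;
finally `R(G') = Q T = T'` because `‖Q - P‖ < 1`.
-/

noncomputable section

open ContinuousLinearMap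

/-- δ(M,N) = sup{dist(x,N) : x ∈ M, ‖x‖ = 1}, with sSup ∅ = 0 covering M = {0}. -/
def gapDelta {H : Type*} [NormedAddCommGroup H] (M N : Set H) : ℝ :=
  sSup ((fun x => Metric.infDist x N) '' {x | x ∈ M ∧ ‖x‖ = 1})

/-- The gap δ̂(M,N) = max{δ(M,N), δ(N,M)}. -/
def gapHat {H : Type*} [NormedAddCommGroup H] (M N : Set H) : ℝ :=
  max (gapDelta M N) (gapDelta N M)

/-- Orthogonal projection onto a closed subspace, as an operator H →L[ℂ] H. -/
def projCLM {H : Type*} [NormedAddCommGroup H] [InnerProductSpace ℂ H] [CompleteSpace H]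
    (K : Submodule ℂ H) (hK : IsClosed (K : Set H)) : H →L[ℂ] H :=
  haveI := hK.completeSpace_coe
  K.subtypeL.comp K.orthogonalProjectionOnto

/-- G is the outer inverse A_{T,S}^{(2)}: GAG = G, R(G) = T, N(G) = S. -/
def IsOuterInv {X Y : Type*} [NormedAddCommGroup X] [NormedSpace ℂ X]
    [NormedAddCommGroup Y] [NormedSpace ℂ Y]
    (A : X →L[ℂ] Y) (T : Submodule ℂ X) (S : Submodule ℂ Y) (G : Y →L[ℂ] X) : Prop :=
  G ∘L (A ∘L G) = G ∧ LinearMap.range (G : Y →ₗ[ℂ] X) = T ∧ LinearMap.ker (G : Y →ₗ[ℂ] X) = S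

/-- B is the Moore–Penrose inverse of A. -/
def IsMPInv {X Y : Type*} [NormedAddCommGroup X] [InnerProductSpace ℂ X] [CompleteSpace X]
    [NormedAddCommGroup Y] [InnerProductSpace ℂ Y] [CompleteSpace Y]
    (A : X →L[ℂ] Y) (B : Y →L[ℂ] X) : Prop :=
  A ∘L (B ∘L A) = A ∧ B ∘L (A ∘L B) = B ∧
  adjoint (A ∘L B) = A ∘L B ∧ adjoint (B ∘L A) = B ∘L A

theorem projCLM_eq_starProjection {H : Type*} [NormedAddCommGroup H] [InnerProductSpace ℂ H]
    [CompleteSpace H] (K : Submodule ℂ H) (hK : IsClosed (K : Set H)) [K.HasOrthogonalProjection] :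
    projCLM K hK = K.starProjection :=
  rfl

section Gap

variable {𝕜 H : Type*} [RCLike 𝕜] [NormedAddCommGroup H] [InnerProductSpace 𝕜 H]

theorem gapDelta_nonneg (M N : Set H) : 0 ≤ gapDelta M N :=
  Real.sSup_nonneg (by rintro r ⟨x, -, rfl⟩; exact Metric.infDist_nonneg)

theorem infDist_le_gapDelta {M : Set H} {N : Submodule 𝕜 H} {x : H} (hx : x ∈ M) (hx1 : ‖x‖ = 1) :
    Metric.infDist x N ≤ gapDelta M N := by
  refine le_csSup ⟨1, ?_⟩ ⟨x, ⟨hx, hx1⟩, rfl⟩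
  rintro r ⟨y, ⟨-, hy1⟩, rfl⟩
  simpa [hy1] using Metric.infDist_le_dist_of_mem (x := y) N.zero_mem

theorem norm_sub_starProjection_eq_infDist (N : Submodule 𝕜 H) [N.HasOrthogonalProjection]
    (x : H) : ‖x - N.starProjection x‖ = Metric.infDist x N := by
  rw [N.starProjection_minimal, Metric.infDist_eq_iInf]
  simp only [dist_eq_norm]
  rfl

theorem norm_sub_starProjection_le_gapDelta {M N : Submodule 𝕜 H} [N.HasOrthogonalProjection]
    {x : H} (hx : x ∈ M) : ‖x - N.starProjection x‖ ≤ gapDelta (M : Set H) N * ‖x‖ := by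
  rcases eq_or_ne x 0 with rfl | hx0
  · simp
  have hnorm : (‖x‖ : 𝕜) ≠ 0 := by simpa using hx0
  set u := (‖x‖ : 𝕜)⁻¹ • x
  have hxu : x = (‖x‖ : 𝕜) • u := by simp only [u, smul_inv_smul₀ hnorm]
  have hu1 : ‖u‖ = 1 := by simp [u, norm_smul, hx0]
  have hu : ‖u - N.starProjection u‖ ≤ gapDelta (M : Set H) N :=
    (norm_sub_starProjection_eq_infDist N u).trans_le (infDist_le_gapDelta (M.smul_mem _ hx) hu1)
  calc ‖x - N.starProjection x‖ = ‖x‖ * ‖u - N.starProjection u‖ := by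
        conv_lhs => rw [hxu, map_smul, ← smul_sub, norm_smul]
        simp
    _ ≤ gapDelta (M : Set H) N * ‖x‖ := by
        rw [mul_comm]; exact mul_le_mul_of_nonneg_right hu (norm_nonneg x)

theorem norm_starProjection_le_gapDelta {M N : Submodule 𝕜 H} [M.HasOrthogonalProjection]
    [N.HasOrthogonalProjection] {y : H} (hy : y ∈ Nᗮ) :
    ‖M.starProjection y‖ ≤ gapDelta (M : Set H) N * ‖y‖ := by
  set z := M.starProjection y
  have hinner : RCLike.re (inner 𝕜 (z - N.starProjection z) y) = ‖z‖ ^ 2 := by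
    rw [inner_sub_left, N.inner_right_of_mem_orthogonal (N.starProjection_apply_mem z) hy, sub_zero,
      Submodule.re_inner_starProjection_eq_normSq]
    rfl
  have h : ‖z‖ * ‖z‖ ≤ (gapDelta (M : Set H) N * ‖y‖) * ‖z‖ :=
    calc ‖z‖ * ‖z‖ = RCLike.re (inner 𝕜 (z - N.starProjection z) y) := by rw [hinner, sq]
      _ ≤ ‖z - N.starProjection z‖ * ‖y‖ := re_inner_le_norm _ _
      _ ≤ gapDelta (M : Set H) N * ‖z‖ * ‖y‖ := by
          gcongr; exact norm_sub_starProjection_le_gapDelta (M.starProjection_apply_mem y)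
      _ = (gapDelta (M : Set H) N * ‖y‖) * ‖z‖ := by ring
  rcases (norm_nonneg z).eq_or_lt with hz | hz
  · rw [← hz]; exact mul_nonneg (gapDelta_nonneg _ _) (norm_nonneg y)
  · exact le_of_mul_le_mul_right h hz

/-- Split `x = y + z` with `y ∈ Nᗮ`, `z ∈ N`; then `(P_M - P_N) x = P_M y - (z - P_M z)` is an
orthogonal sum of terms bounded by `δ(M,N) ‖y‖` and `δ(N,M) ‖z‖`. -/
theorem norm_starProjection_sub_starProjection_le_gapHat (M N : Submodule 𝕜 H)
    [M.HasOrthogonalProjection] [N.HasOrthogonalProjection] :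
    ‖M.starProjection - N.starProjection‖ ≤ gapHat (M : Set H) N := by
  set δ := gapHat (M : Set H) N
  have hδ : 0 ≤ δ := (gapDelta_nonneg _ _).trans (le_max_left _ _)
  refine ContinuousLinearMap.opNorm_le_bound _ hδ fun x => ?_
  set z := N.starProjection x
  set y := x - z
  have hy : y ∈ Nᗮ := N.sub_starProjection_mem_orthogonal x
  have hz : z ∈ N := N.starProjection_apply_mem x
  have hsplit : (M.starProjection - N.starProjection) x
      = M.starProjection y - (z - M.starProjection z) := by
    simp only [y, sub_apply, map_sub]; abel
  have hx : ‖x‖ * ‖x‖ = ‖y‖ * ‖y‖ + ‖z‖ * ‖z‖ := by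
    have := norm_add_sq_eq_norm_sq_add_norm_sq_of_inner_eq_zero y z
      (N.inner_left_of_mem_orthogonal hz hy)
    rwa [sub_add_cancel] at this
  have hpyth : ‖(M.starProjection - N.starProjection) x‖ * ‖(M.starProjection - N.starProjection) x‖
      = ‖M.starProjection y‖ * ‖M.starProjection y‖
        + ‖z - M.starProjection z‖ * ‖z - M.starProjection z‖ := by
    rw [hsplit, sub_eq_add_neg, norm_add_sq_eq_norm_sq_add_norm_sq_of_inner_eq_zero (𝕜 := 𝕜),
      norm_neg]
    exact M.inner_right_of_mem_orthogonal (M.starProjection_apply_mem y)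
      (Submodule.neg_mem _ (M.sub_starProjection_mem_orthogonal z))
  have hy' : ‖M.starProjection y‖ ≤ δ * ‖y‖ :=
    (norm_starProjection_le_gapDelta hy).trans (by gcongr; exact le_max_left _ _)
  have hz' : ‖z - M.starProjection z‖ ≤ δ * ‖z‖ :=
    (norm_sub_starProjection_le_gapDelta hz).trans (by gcongr; exact le_max_right _ _)
  refine nonneg_le_nonneg_of_sq_le_sq (mul_nonneg hδ (norm_nonneg x)) ?_
  rw [hpyth]
  calc _ ≤ δ * ‖y‖ * (δ * ‖y‖) + δ * ‖z‖ * (δ * ‖z‖) := by gcongr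
    _ = δ * ‖x‖ * (δ * ‖x‖) := by linear_combination (δ * δ) * hx.symm

end Gap

theorem norm_ringInverse_one_add_le {𝕜 E : Type*} [NontriviallyNormedField 𝕜]
    [NormedAddCommGroup E] [NormedSpace 𝕜 E] [CompleteSpace E] (t : E →L[𝕜] E) (ht : ‖t‖ < 1) :
    ‖Ring.inverse (1 + t)‖ ≤ (1 - ‖t‖)⁻¹ := by
  have ht' : ‖-t‖ < 1 := by rwa [norm_neg]
  rw [← sub_neg_eq_add, NormedRing.inverse_one_sub _ ht']
  calc ‖∑' n : ℕ, (-t) ^ n‖ ≤ ‖(1 : E →L[𝕜] E)‖ - 1 + (1 - ‖-t‖)⁻¹ :=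
        tsum_geometric_le_of_norm_lt_one _ ht'
    _ ≤ (1 - ‖t‖)⁻¹ := by
        have : ‖(1 : E →L[𝕜] E)‖ ≤ 1 := ContinuousLinearMap.norm_id_le
        rw [norm_neg]; linarith

section Projection

variable {𝕜 E : Type*} [RCLike 𝕜] [NormedAddCommGroup E] [InnerProductSpace 𝕜 E] [CompleteSpace E]

/-- `1 - Q (Q - P)` is invertible, and applying `Q` to `(1 - Q (Q - P)) v = x ∈ N` gives
`x = Q (P v)`. -/
theorem map_starProjection_eq_of_norm_sub_lt_one {M N : Submodule 𝕜 E} [M.HasOrthogonalProjection]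
    [N.HasOrthogonalProjection] (h : ‖N.starProjection - M.starProjection‖ < 1) :
    M.map (N.starProjection : E →ₗ[𝕜] E) = N := by
  set P := M.starProjection
  set Q := N.starProjection
  refine le_antisymm (Submodule.map_le_iff_le_comap.2 fun x _ => N.starProjection_apply_mem x) ?_
  intro x hx
  have hK : ‖Q ∘L (Q - P)‖ < 1 :=
    (opNorm_comp_le _ _).trans_lt <|
      (mul_le_of_le_one_left (norm_nonneg _) N.starProjection_norm_le).trans_lt h
  set u := Units.oneSub _ hK
  set v := (↑u⁻¹ : E →L[𝕜] E) x
  have hQQ (w : E) : Q (Q w) = Q w := N.starProjection_eq_self_iff.2 (N.starProjection_apply_mem w)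
  have hv : v - (Q v - Q (P v)) = x := by simpa [u, v, hQQ] using congr($(u.mul_inv) x)
  refine ⟨P v, M.starProjection_apply_mem v, ?_⟩
  have := congr(Q $hv)
  rwa [map_sub, map_sub, hQQ, hQQ, N.starProjection_eq_self_iff.2 hx, sub_sub_cancel] at this

theorem comp_starProjection_orthogonal_of_ker_eq {F : Type*} [NormedAddCommGroup F]
    [NormedSpace 𝕜 F] {G : E →L[𝕜] F} {S : Submodule 𝕜 E} (hS : LinearMap.ker (G : E →ₗ[𝕜] F) = S)
    [Sᗮ.HasOrthogonalProjection] : G ∘L Sᗮ.starProjection = G := by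
  have hclosed : IsClosed (S : Set E) := hS ▸ G.isClosed_ker
  ext y
  have hmem := Sᗮ.sub_starProjection_mem_orthogonal y
  rw [Submodule.orthogonal_orthogonal_eq_closure, hclosed.submodule_topologicalClosure_eq] at hmem
  have hG0 : G (y - Sᗮ.starProjection y) = 0 :=
    (LinearMap.mem_ker (f := (G : E →ₗ[𝕜] F))).1 (hS ▸ hmem)
  rw [map_sub, sub_eq_zero] at hG0
  exact hG0.symm

end Projection

section OuterInverse

variable {X Y : Type*} [NormedAddCommGroup X] [NormedSpace ℂ X] [NormedAddCommGroup Y]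
  [NormedSpace ℂ Y] {A : X →L[ℂ] Y} {T T' : Submodule ℂ X} {S : Submodule ℂ Y} {G : Y →L[ℂ] X}

theorem isOuterInv_comp_of_ker_eq (hker : LinearMap.ker (G : Y →ₗ[ℂ] X) = S)
    {K : X →L[ℂ] X} (hK : G ∘L (A ∘L (K ∘L G)) = G)
    (hrange : LinearMap.range ((K ∘L G : Y →L[ℂ] X) : Y →ₗ[ℂ] X) = T') :
    IsOuterInv A T' S (K ∘L G) := by
  refine ⟨?_, hrange, ?_⟩
  · ext y
    exact congr(K ($hK y))
  · rw [← hker]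
    ext y
    simp only [LinearMap.mem_ker, ContinuousLinearMap.coe_coe, ContinuousLinearMap.comp_apply]
    refine ⟨fun h => ?_, fun h => by rw [h, map_zero]⟩
    rw [← congr($hK y)]
    simp [h]

namespace IsOuterInv

theorem apply_mem (hG : IsOuterInv A T S G) (y : Y) : G y ∈ T :=
  hG.2.1 ▸ LinearMap.mem_range_self (G : Y →ₗ[ℂ] X) y

theorem apply_apply_of_mem (hG : IsOuterInv A T S G) {x : X} (hx : x ∈ T) :
    G (A x) = x := by
  rw [← hG.2.1] at hx
  obtain ⟨y, rfl⟩ := hx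
  exact congr($(hG.1) y)

end IsOuterInv

end OuterInverse

section Perturbation

variable {X Y : Type*} [NormedAddCommGroup X] [InnerProductSpace ℂ X] [NormedAddCommGroup Y]
  [NormedSpace ℂ Y] {A : X →L[ℂ] Y} {T T' : Submodule ℂ X}
  {S : Submodule ℂ Y} {G : Y →L[ℂ] X}

/-- With `t = G A (Q - P)` one has `P (1 + t) = G A Q`, so `G A Q (1 + t)⁻¹ = P` and hence
`G A G' = G`; the range is `Q T` because `1 + t` maps `T` into `T = range G`. -/
theorem IsOuterInv.starProjection_comp_ringInverse
    (hG : IsOuterInv A T S G) [T.HasOrthogonalProjection] [T'.HasOrthogonalProjection]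
    (hunit : IsUnit (1 + G ∘L (A ∘L (T'.starProjection - T.starProjection))))
    (hmap : T.map (T'.starProjection : X →ₗ[ℂ] X) = T') :
    IsOuterInv A T' S (T'.starProjection ∘L
      (Ring.inverse (1 + G ∘L (A ∘L (T'.starProjection - T.starProjection))) ∘L G)) := by
  set P := T.starProjection
  set Q := T'.starProjection
  set t := G ∘L (A ∘L (Q - P))
  set B := Ring.inverse (1 + t)
  have hBinv (x : X) : B x + t (B x) = x := congr($(Ring.mul_inverse_cancel _ hunit) x)
  have hinvB (x : X) : B (x + t x) = x := congr($(Ring.inverse_mul_cancel _ hunit) x)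
  have htT (z : X) : P (t z) = t z := T.starProjection_eq_self_iff.2 (hG.apply_mem _)
  have hPt (z : X) : P z + t z = G (A (Q z)) := by
    have hGAP : G (A (P z)) = P z := hG.apply_apply_of_mem (T.starProjection_apply_mem z)
    simp only [t, ContinuousLinearMap.comp_apply, sub_apply, map_sub, hGAP]
    abel
  have hGAQB (x : X) : G (A (Q (B x))) = P x := by
    rw [← hPt, ← htT, ← map_add, hBinv]
  rw [← ContinuousLinearMap.comp_assoc]
  refine isOuterInv_comp_of_ker_eq hG.2.2 ?_ ?_
  · ext y
    exact (hGAQB (G y)).trans (T.starProjection_eq_self_iff.2 (hG.apply_mem y))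
  · refine le_antisymm (fun x ⟨y, hy⟩ => hy ▸ T'.starProjection_apply_mem _) ?_
    rw [← hmap]
    rintro _ ⟨m, hm, rfl⟩
    obtain ⟨y, hy⟩ : m + t m ∈ LinearMap.range (G : Y →ₗ[ℂ] X) := by
      rw [hG.2.1]; exact T.add_mem hm (hG.apply_mem _)
    refine ⟨y, ?_⟩
    change Q (B (G y)) = Q m
    rw [show G y = m + t m from hy, hinvB]

end Perturbation

variable {X Y : Type*} [NormedAddCommGroup X] [InnerProductSpace ℂ X] [CompleteSpace X]
  [NormedAddCommGroup Y] [InnerProductSpace ℂ Y] [CompleteSpace Y]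
theorem stmt_9_general (A : X →L[ℂ] Y) (T T' : Submodule ℂ X) (S : Submodule ℂ Y)
    (hT : IsClosed (T : Set X)) (hT' : IsClosed (T' : Set X))
    (G : Y →L[ℂ] X) (hG : IsOuterInv A T S G)
    (hgap : gapHat (T : Set X) (T' : Set X) < 1 / (1 + ‖A‖ * ‖G‖) ^ 2) :
    ∃ G' : Y →L[ℂ] X, IsOuterInv A T' S G' ∧
      G' = projCLM T' hT' ∘L
        (Ring.inverse (1 + G ∘L (projCLM Sᗮ (Submodule.isClosed_orthogonal S) ∘L
            (A ∘L (projCLM T' hT' - projCLM T hT)))) ∘L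
          (G ∘L projCLM Sᗮ (Submodule.isClosed_orthogonal S))) ∧
      ‖G'‖ ≤ ‖G‖ / (1 - ‖G‖ * ‖A‖ * gapHat (T : Set X) (T' : Set X)) := by
  have := hT.completeSpace_coe
  have := hT'.completeSpace_coe
  have := (Submodule.isClosed_orthogonal S).completeSpace_coe
  simp only [projCLM_eq_starProjection]
  rw [← ContinuousLinearMap.comp_assoc G, comp_starProjection_orthogonal_of_ker_eq hG.2.2]
  set δ := gapHat (T : Set X) T'
  set t := G ∘L (A ∘L (T'.starProjection - T.starProjection))
  have hδ : ‖T'.starProjection - T.starProjection‖ ≤ δ := by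
    rw [norm_sub_rev]; exact norm_starProjection_sub_starProjection_le_gapHat T T'
  have hδ0 : 0 ≤ δ := (norm_nonneg _).trans hδ
  obtain ⟨hδ1, hsmall⟩ : δ < 1 ∧ ‖G‖ * ‖A‖ * δ < 1 := by
    rw [lt_div_iff₀ (by positivity), mul_comm ‖A‖] at hgap
    constructor <;> nlinarith [mul_nonneg (norm_nonneg G) (norm_nonneg A)]
  have ht : ‖t‖ ≤ ‖G‖ * ‖A‖ * δ :=
    calc ‖t‖ ≤ ‖G‖ * (‖A‖ * ‖T'.starProjection - T.starProjection‖) :=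
          (opNorm_comp_le _ _).trans (by gcongr; exact opNorm_comp_le _ _)
      _ ≤ ‖G‖ * ‖A‖ * δ := by rw [← mul_assoc]; gcongr
  have ht1 : ‖t‖ < 1 := ht.trans_lt hsmall
  refine ⟨_, hG.starProjection_comp_ringInverse ?_ ?_, rfl, ?_⟩
  · simpa only [sub_neg_eq_add] using
      isUnit_one_sub_of_norm_lt_one (x := -t) (by rwa [norm_neg])
  · exact map_starProjection_eq_of_norm_sub_lt_one (hδ.trans_lt hδ1)
  · calc _ ≤ ‖T'.starProjection‖ * (‖Ring.inverse (1 + t)‖ * ‖G‖) :=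
          (opNorm_comp_le _ _).trans (by gcongr; exact opNorm_comp_le _ _)
      _ ≤ 1 * ((1 - ‖t‖)⁻¹ * ‖G‖) := by
          gcongr
          exacts [T'.starProjection_norm_le, norm_ringInverse_one_add_le t ht1]
      _ ≤ ‖G‖ / (1 - ‖G‖ * ‖A‖ * δ) := by
          rw [one_mul, inv_mul_eq_div]
          gcongr

theorem stmt_9 (A : X →L[ℂ] Y) (T T' : Submodule ℂ X) (S : Submodule ℂ Y)
    (hT : IsClosed (T : Set X)) (hT' : IsClosed (T' : Set X)) (hS : IsClosed (S : Set Y))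
    (G : Y →L[ℂ] X) (hG : IsOuterInv A T S G)
    (hgap : gapHat (T : Set X) (T' : Set X) < 1 / (1 + ‖A‖ * ‖G‖) ^ 2) :
    ∃ G' : Y →L[ℂ] X, IsOuterInv A T' S G' ∧
      G' = projCLM T' hT' ∘L
        (Ring.inverse (1 + G ∘L (projCLM Sᗮ (Submodule.isClosed_orthogonal S) ∘L
            (A ∘L (projCLM T' hT' - projCLM T hT)))) ∘L
          (G ∘L projCLM Sᗮ (Submodule.isClosed_orthogonal S))) ∧
      ‖G'‖ ≤ ‖G‖ / (1 - ‖G‖ * ‖A‖ * gapHat (T : Set X) (T' : Set X)) :=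
  stmt_9_general A T T' S hT hT' G hG hgap
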